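/- If the decryption key components satisfy K_{i,0} = g₂^{M_i·u} · T(i)^{r_i}, K_{i,1} = g^{r_i}, U₀ = g₂^{α-α_x} · W^r, U₁ = g^r, and the ciphertext components satisfy C = e(g₁,g₂)^s · m, C₁ = g^s, C_{2,i} = T(i)^s, E_t = W^s (where g₁ = g^α and W is a fixed group element), and the reconstruction coefficients w_i satisfy Σ_i w_i (M_i·u) = α_x, then the decryption computation C / (A₁ · A₂) with A₁ = Π_i (e(C₁, K_{i,0}) / e(C_{2,i}, K_{i,1}))^{w_i} and A₂ = e(C₁, U₀) / e(E_t, U₁) recovers the message m. -/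
import Mathlib


private lemma prod_zpow_eq_zpow_sum {β ι : Type*} [CommGroup β] (s : Finset ι)
    (f : ι → ℤ) (a : β) : ∏ i ∈ s, a ^ f i = a ^ ∑ i ∈ s, f i :=
  Finset.cons_induction (by simp)
    (fun _ _ _ ih ↦ by simp [Finset.prod_cons, Finset.sum_cons, zpow_add, ih]) s

theorem rabe_decrypt_correct {G GT : Type*} [CommGroup G] [CommGroup GT]
    (e : G → G → GT)
    (hbil : ∀ (x y : G) (a b : ℤ), e (x ^ a) (y ^ b) = e x y ^ (a * b))
    (hmulL : ∀ x y z : G, e (x * y) z = e x z * e y z)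
    (hmulR : ∀ x y z : G, e x (y * z) = e x y * e x z)
    (hsym : ∀ x y : G, e x y = e y x)
    (d : ℕ) (g g₂ W : G) (Ti : Fin d → G)
    (α αx s r : ℤ) (μ w ri : Fin d → ℤ) (m : GT)
    (hrec : ∑ i, w i * μ i = αx)
    (g₁ : G) (hg₁ : g₁ = g ^ α)
    (K0 : Fin d → G) (hK0 : ∀ i, K0 i = g₂ ^ μ i * Ti i ^ ri i)
    (K1 : Fin d → G) (hK1 : ∀ i, K1 i = g ^ ri i)
    (U0 : G) (hU0 : U0 = g₂ ^ (α - αx) * W ^ r)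
    (U1 : G) (hU1 : U1 = g ^ r)
    (C : GT) (hC : C = e g₁ g₂ ^ s * m)
    (C1 : G) (hC1 : C1 = g ^ s)
    (C2 : Fin d → G) (hC2 : ∀ i, C2 i = Ti i ^ s)
    (Et : G) (hEt : Et = W ^ s)
    (A1 : GT) (hA1 : A1 = ∏ i, (e C1 (K0 i) / e (C2 i) (K1 i)) ^ w i)
    (A2 : GT) (hA2 : A2 = e C1 U0 / e Et U1) :
    C / (A1 * A2) = m := by
  subst hg₁ hU0 hU1 hC hC1 hEt hA1 hA2
  have h1 : ∀ i : Fin d, (e (g ^ s) (K0 i) / e (C2 i) (K1 i)) ^ w i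
      = e g g₂ ^ (s * μ i * w i) := by
    intro i
    rw [hK0 i, hK1 i, hC2 i, hmulR, hbil, hbil, hsym (Ti i ^ s), hbil, mul_comm (ri i) s,
      mul_div_assoc, div_self', mul_one, ← zpow_mul]
  have hA1' : (∏ i, (e (g ^ s) (K0 i) / e (C2 i) (K1 i)) ^ w i) = e g g₂ ^ (s * αx) := by
    rw [Finset.prod_congr rfl (fun i _ => h1 i), prod_zpow_eq_zpow_sum]
    congr 1
    rw [← hrec, Finset.mul_sum]
    exact Finset.sum_congr rfl (fun i _ => by ring)
  have hA2' : e (g ^ s) (g₂ ^ (α - αx) * W ^ r) / e (W ^ s) (g ^ r)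
      = e g g₂ ^ (s * (α - αx)) := by
    rw [hmulR, hbil, hbil, hsym (W ^ s), hbil, mul_comm r s, mul_div_assoc, div_self', mul_one]
  have hCe : e (g ^ α) g₂ ^ s = e g g₂ ^ (α * s) := by
    rw [show e (g ^ α) g₂ = e g g₂ ^ α from by simpa using hbil g g₂ α 1, ← zpow_mul]
  rw [hA1', hA2', hCe, ← zpow_add]
  have : α * s = s * αx + s * (α - αx) := by ring
  rw [← this, mul_comm (e g g₂ ^ (α * s)) m, mul_div_assoc, div_self', mul_one]
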